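/- arXiv:1905.06663 — 4 statements merged into one kernel-verified Lean document; each statement's English description precedes it below -/
import Mathlib

section
/- For positive integers m ≤ n and p ∈ (0,1), the binomial tail satisfies ∑_{i=m}^{n} C(n,i) p^i (1-p)^{n-i} ≤ (np)^m / m!. -/
/-!
Each term of the tail with `i ≥ m` is at most `C(i,m)` times itself, and the `C(i,m)`-weighted sum
(the `m`-th factorial moment, divided by `m!`) collapses to `C(n,m) p^m` by `C(n,i) C(i,m) = C(n,m) C(n-m,i-m)`
and the binomial theorem. Finally `C(n,m) ≤ n^m / m!`.
-/

open Finset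

theorem sum_Icc_choose_mul_choose_mul_pow {R : Type*} [CommSemiring R] (p q : R) (m n : ℕ) :
    ∑ i ∈ Icc m n, (i.choose m : R) * (n.choose i * p ^ i * q ^ (n - i))
      = n.choose m * p ^ m * (p + q) ^ (n - m) := by
  rcases le_or_gt m n with hmn | hnm
  · rw [← Finset.Ico_add_one_right_eq_Icc, sum_Ico_eq_sum_range, add_pow, mul_sum,
      show n + 1 - m = n - m + 1 by omega]
    refine sum_congr rfl fun j hj => ?_
    have hjn : m + j ≤ n := by have := mem_range.mp hj; omega
    have hchoose : n.choose (m + j) * (m + j).choose m = n.choose m * (n - m).choose j := by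
      simpa using Nat.choose_mul (n := n) (Nat.le_add_right m j)
    rw [show n - (m + j) = n - m - j by omega, pow_add]
    calc ((m + j).choose m : R) * (n.choose (m + j) * (p ^ m * p ^ j) * q ^ (n - m - j))
        = ((n.choose (m + j) * (m + j).choose m : ℕ) : R) * (p ^ m * p ^ j * q ^ (n - m - j)) := by
          push_cast; ring
      _ = _ := by rw [hchoose]; push_cast; ring
  · rw [Icc_eq_empty_of_lt hnm, sum_empty, Nat.choose_eq_zero_of_lt hnm, Nat.cast_zero,
      zero_mul, zero_mul]

theorem sum_Icc_choose_mul_pow_le_choose_mul_pow (m n : ℕ) {p : ℝ} (hp0 : 0 ≤ p) (hp1 : p ≤ 1) :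
    ∑ i ∈ Icc m n, (n.choose i : ℝ) * p ^ i * (1 - p) ^ (n - i) ≤ n.choose m * p ^ m := by
  calc ∑ i ∈ Icc m n, (n.choose i : ℝ) * p ^ i * (1 - p) ^ (n - i)
      ≤ ∑ i ∈ Icc m n, (i.choose m : ℝ) * (n.choose i * p ^ i * (1 - p) ^ (n - i)) := by
        refine sum_le_sum fun i hi => le_mul_of_one_le_left (by bound) ?_
        exact_mod_cast Nat.choose_pos (mem_Icc.mp hi).1
    _ = n.choose m * p ^ m := by
        rw [sum_Icc_choose_mul_choose_mul_pow, add_sub_cancel, one_pow, mul_one]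

theorem choose_mul_pow_le_mul_pow_div_factorial (m n : ℕ) {p : ℝ} (hp : 0 ≤ p) :
    (n.choose m : ℝ) * p ^ m ≤ (n * p) ^ m / m.factorial := by
  rw [mul_pow, mul_div_right_comm]
  exact mul_le_mul_of_nonneg_right (Nat.choose_le_pow_div m n) (pow_nonneg hp m)

theorem binomial_tail_bound_general (m n : ℕ) (p : ℝ) (hp0 : 0 < p) (hp1 : p < 1) :
    ∑ i ∈ Finset.Icc m n, (n.choose i : ℝ) * p ^ i * (1 - p) ^ (n - i)
      ≤ ((n : ℝ) * p) ^ m / (m.factorial : ℝ) :=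
  (sum_Icc_choose_mul_pow_le_choose_mul_pow m n hp0.le hp1.le).trans
    (choose_mul_pow_le_mul_pow_div_factorial m n hp0.le)

/-- Binomial tail bound: for `1 ≤ m ≤ n` and `p ∈ (0,1)`,
`∑_{i=m}^{n} C(n,i) p^i (1-p)^{n-i} ≤ (np)^m / m!`. -/
theorem binomial_tail_bound (m n : ℕ) (hm : 0 < m) (hmn : m ≤ n)
    (p : ℝ) (hp0 : 0 < p) (hp1 : p < 1) :
    ∑ i ∈ Finset.Icc m n, (n.choose i : ℝ) * p ^ i * (1 - p) ^ (n - i)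
      ≤ ((n : ℝ) * p) ^ m / (m.factorial : ℝ) :=
  binomial_tail_bound_general m n p hp0 hp1
end

section
/- Let X_1,…,X_{k-1} be i.i.d. random variables with values in a countable set M, and for m ∈ M let N(m) = ∑_{j=1}^{k-1} 1{X_j = m}. Then for distinct m_1 ≠ m_2 in M and all x_1, x_2, one has P(N(m_1) ≥ x_1, N(m_2) ≥ x_2) ≤ P(N(m_1) ≥ x_1)·P(N(m_2) ≥ x_2). -/
open MeasureTheory ProbabilityTheory
open scoped Classical

/-!
Each ball moves the pair of counts `(N m₁, N m₂)` by one of the steps `(1, 0)`, `(0, 1)`,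
`(0, 0)`, independently of the other balls, so the law of the pair is an iterated convolution
of laws carried by these three steps. Negative upper orthant dependence survives convolution
with such a law: if the steps have probabilities `p, q, r`, both sides of the orthant inequality
become `p, q, r`-mixtures of quantities controlled by the induction hypothesis, and the product
of the mixed marginals exceeds the mixed joint bound by `p q (f₁ - f₀) (g₁ - g₀) ≥ 0`, where
`f₀ ≤ f₁` and `g₀ ≤ g₁` are the marginal tails before and after lowering a threshold by one.
-/

open Set

lemma ENNReal.mixture_mul_le_mul_mixture {p q r f₀ f₁ g₀ g₁ : ENNReal} (hpqr : r + (p + q) = 1)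
    (hf : f₀ ≤ f₁) (hg : g₀ ≤ g₁) :
    f₀ * g₀ * r + (f₁ * g₀ * p + f₀ * g₁ * q)
      ≤ (f₀ * r + (f₁ * p + f₀ * q)) * (g₀ * r + (g₀ * p + g₁ * q)) := by
  obtain ⟨d, rfl⟩ := exists_add_of_le hf
  obtain ⟨e, rfl⟩ := exists_add_of_le hg
  calc f₀ * g₀ * r + ((f₀ + d) * g₀ * p + f₀ * (g₀ + e) * q)
      = f₀ * g₀ * (r + (p + q)) + (d * g₀ * p + f₀ * e * q) := by ring
    _ ≤ f₀ * g₀ * (r + (p + q)) + (d * g₀ * p + f₀ * e * q) + d * p * (e * q) := le_self_add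
    _ = (f₀ * (r + (p + q)) + d * p) * (g₀ * (r + (p + q)) + e * q) := by
        rw [hpqr]; ring
    _ = _ := by ring

lemma Set.preimage_add_const_Ici_eq_Ici_tsub {α : Type*} [AddCommMonoid α] [PartialOrder α]
    [Sub α] [OrderedSub α] (a b : α) : (· + a) ⁻¹' Ici b = Ici (b - a) := by
  ext x
  exact tsub_le_iff_right.symm

lemma MeasureTheory.Measure.conv_apply_eq_sum_of_ae_mem {G : Type*} [AddMonoid G]
    [MeasurableSpace G] [MeasurableAdd₂ G] [MeasurableSingletonClass G]
    {ν ρ : Measure G} [SFinite ν] [SFinite ρ] {T : Finset G} (hρ : ∀ᵐ w ∂ρ, w ∈ T)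
    {S : Set G} (hS : MeasurableSet S) :
    (ν ∗ ρ) S = ∑ w ∈ T, ν ((· + w) ⁻¹' S) * ρ {w} :=
  calc (ν ∗ ρ) S = ∫⁻ w, ν ((· + w) ⁻¹' S) ∂ρ := by
        rw [Measure.conv, Measure.map_apply measurable_add hS,
          Measure.prod_apply_symm (measurable_add hS)]
        rfl
    _ = ∫⁻ w in T, ν ((· + w) ⁻¹' S) ∂ρ := by rw [Measure.restrict_eq_self_of_ae_mem hρ]
    _ = _ := lintegral_finset _ _

/-- `Ici (x.1, 0)` and `Ici (0, x.2)` are the marginal events `{z | x.1 ≤ z.1}` and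
`{z | x.2 ≤ z.2}`. -/
def NegUpperOrthantDep (ν : Measure (ℕ × ℕ)) : Prop :=
  ∀ x : ℕ × ℕ, ν (Ici x) ≤ ν (Ici (x.1, 0)) * ν (Ici (0, x.2))

def unitSteps : Finset (ℕ × ℕ) := {0, (1, 0), (0, 1)}

lemma negUpperOrthantDep_dirac (z : ℕ × ℕ) : NegUpperOrthantDep (Measure.dirac z) := by
  intro x
  simp only [Measure.dirac_apply' _ measurableSet_Ici, indicator, mem_Ici, Prod.le_def,
    zero_le, and_true, true_and]
  split_ifs <;> simp_all

theorem NegUpperOrthantDep.conv {ν ρ : Measure (ℕ × ℕ)} [SFinite ν] [IsProbabilityMeasure ρ]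
    (hν : NegUpperOrthantDep ν) (hρ : ∀ᵐ w ∂ρ, w ∈ unitSteps) :
    NegUpperOrthantDep (ν ∗ ρ) := by
  have h0 : (0 : ℕ × ℕ) ∉ ({(1, 0), (0, 1)} : Finset (ℕ × ℕ)) := by decide
  have h10 : ((1, 0) : ℕ × ℕ) ≠ (0, 1) := by decide
  have hmass : ρ {0} + (ρ {(1, 0)} + ρ {(0, 1)}) = 1 := by
    rw [← (prob_compl_eq_zero_iff unitSteps.measurableSet).1 (ae_iff.1 hρ),
      ← sum_measure_singleton, unitSteps, Finset.sum_insert h0, Finset.sum_pair h10]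
  rintro ⟨a, b⟩
  simp only [Measure.conv_apply_eq_sum_of_ae_mem hρ measurableSet_Ici,
    preimage_add_const_Ici_eq_Ici_tsub, unitSteps, Finset.sum_insert h0, Finset.sum_pair h10,
    Prod.mk_sub_mk, tsub_zero, zero_tsub]
  calc _ ≤ ν (Ici (a, 0)) * ν (Ici (0, b)) * ρ {0}
        + (ν (Ici (a - 1, 0)) * ν (Ici (0, b)) * ρ {(1, 0)}
          + ν (Ici (a, 0)) * ν (Ici (0, b - 1)) * ρ {(0, 1)}) := by
        gcongr <;> exact hν _
    _ ≤ _ := ENNReal.mixture_mul_le_mul_mixture hmass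
        (measure_mono (Ici_subset_Ici.2 (Prod.mk_le_mk.2 ⟨tsub_le_self, le_rfl⟩)))
        (measure_mono (Ici_subset_Ici.2 (Prod.mk_le_mk.2 ⟨le_rfl, tsub_le_self⟩)))

theorem negUpperOrthantDep_map_sum {Ω ι : Type*} [MeasurableSpace Ω] {μ : Measure Ω}
    [IsProbabilityMeasure μ] {Y : ι → Ω → ℕ × ℕ} (hY : ∀ i, Measurable (Y i))
    (hindep : iIndepFun Y μ) (hsteps : ∀ i, ∀ᵐ ω ∂μ, Y i ω ∈ unitSteps) (s : Finset ι) :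
    NegUpperOrthantDep (μ.map (∑ i ∈ s, Y i)) := by
  induction s using Finset.induction_on with
  | empty =>
    rw [Finset.sum_empty, Pi.zero_def, Measure.map_const, measure_univ, one_smul]
    exact negUpperOrthantDep_dirac 0
  | insert j s hj ih =>
    have hsum : Measurable (∑ i ∈ s, Y i) := by
      simpa only [Finset.sum_fn] using Finset.measurable_sum s fun i _ => hY i
    rw [Finset.sum_insert hj, add_comm,
      (hindep.indepFun_finsetSum_of_notMem hY hj).map_add_eq_map_conv_map hsum (hY j)]
    have := Measure.isProbabilityMeasure_map (μ := μ) (hY j).aemeasurable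
    exact ih.conv ((ae_map_iff (hY j).aemeasurable .of_discrete).2 (hsteps j))

section CellIndicators

variable {M : Type*} (m₁ m₂ : M)

noncomputable def cellIndicators (y : M) : ℕ × ℕ := (if y = m₁ then 1 else 0, if y = m₂ then 1 else 0)

lemma measurable_cellIndicators [MeasurableSpace M] [MeasurableSingletonClass M] :
    Measurable (cellIndicators m₁ m₂) :=
  (measurable_const.ite (measurableSet_singleton m₁) measurable_const).prodMk
    (measurable_const.ite (measurableSet_singleton m₂) measurable_const)

variable {m₁ m₂}

lemma cellIndicators_mem_unitSteps (hne : m₁ ≠ m₂) (y : M) :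
    cellIndicators m₁ m₂ y ∈ unitSteps := by
  simp only [cellIndicators]
  split_ifs <;> simp_all [unitSteps]

end CellIndicators

theorem multinomial_counts_NOD_general
    {Ω : Type*} [MeasurableSpace Ω] (μ : Measure Ω) [IsProbabilityMeasure μ]
    {M : Type*} [MeasurableSpace M] [MeasurableSingletonClass M]
    (K : ℕ) (X : Fin K → Ω → M)
    (hmeas : ∀ j, Measurable (X j))
    (hindep : iIndepFun X μ)
    (N : M → Ω → ℕ)
    (hN : ∀ m ω, N m ω = (Finset.univ.filter (fun j => X j ω = m)).card)
    (m₁ m₂ : M) (hne : m₁ ≠ m₂) (x₁ x₂ : ℕ) :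
    μ {ω | x₁ ≤ N m₁ ω ∧ x₂ ≤ N m₂ ω}
      ≤ μ {ω | x₁ ≤ N m₁ ω} * μ {ω | x₂ ≤ N m₂ ω} := by
  have hY : ∀ j, Measurable (cellIndicators m₁ m₂ ∘ X j) := fun j =>
    (measurable_cellIndicators m₁ m₂).comp (hmeas j)
  have hcounts : (fun ω => (N m₁ ω, N m₂ ω)) = ∑ j, cellIndicators m₁ m₂ ∘ X j := by
    ext ω <;> simp only [hN, Finset.card_filter, Finset.sum_apply, Prod.fst_sum, Prod.snd_sum,
      Function.comp_apply, cellIndicators]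
  have hcounts_meas : Measurable fun ω => (N m₁ ω, N m₂ ω) := by
    simpa only [hcounts, Finset.sum_fn] using Finset.measurable_sum _ fun j _ => hY j
  have hlaw := negUpperOrthantDep_map_sum hY
    (hindep.comp (fun _ => cellIndicators m₁ m₂) fun _ => measurable_cellIndicators m₁ m₂)
    (fun j => ae_of_all μ fun ω => cellIndicators_mem_unitSteps hne (X j ω)) Finset.univ
    (x₁, x₂)
  rw [← hcounts] at hlaw
  simp only [Measure.map_apply hcounts_meas measurableSet_Ici] at hlaw
  convert hlaw using 3 <;> ext <;> simp [Prod.le_def]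

/-- Negative orthant dependence of multinomial counts: if `X_1,…,X_K` are i.i.d. with values
in a countable set `M`, and `N(m)` counts how many of them equal `m`, then for `m₁ ≠ m₂`,
`P(N(m₁) ≥ x₁, N(m₂) ≥ x₂) ≤ P(N(m₁) ≥ x₁)·P(N(m₂) ≥ x₂)`. -/
theorem multinomial_counts_NOD
    {Ω : Type*} [MeasurableSpace Ω] (μ : Measure Ω) [IsProbabilityMeasure μ]
    {M : Type*} [MeasurableSpace M] [MeasurableSingletonClass M] [Countable M]
    (K : ℕ) (X : Fin K → Ω → M)
    (hmeas : ∀ j, Measurable (X j))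
    (hindep : iIndepFun X μ)
    (hident : ∀ i j, IdentDistrib (X i) (X j) μ μ)
    (N : M → Ω → ℕ)
    (hN : ∀ m ω, N m ω = (Finset.univ.filter (fun j => X j ω = m)).card)
    (m₁ m₂ : M) (hne : m₁ ≠ m₂) (x₁ x₂ : ℕ) :
    μ {ω | x₁ ≤ N m₁ ω ∧ x₂ ≤ N m₂ ω}
      ≤ μ {ω | x₁ ≤ N m₁ ω} * μ {ω | x₂ ≤ N m₂ ω} :=
  multinomial_counts_NOD_general μ K X hmeas hindep N hN m₁ m₂ hne x₁ x₂
end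

section
/- With V_{n,r} the overflow, E[V_{n,r}] = ∑_{k=1}^n ∑_{i=r}^{k-1} C(k-1,i) E[p_{X_n}^i (1-p_{X_n})^{k-1-i}] ≤ n^{r+1}/(r+1)! · E[p_{X_n}^r], where p_{X_n} is the random variable with E[f(p_{X_n})] = ∑_m p_{n,m} f(p_{n,m}). -/
open MeasureTheory ProbabilityTheory Filter
open scoped Classical
open scoped ENNReal

/-- Number of balls among the first `k-1` balls that fall in urn `m`
(balls are labelled `1,…,n`). -/
def urnCount {Ω : Type*} (X : ℕ → Ω → ℕ) (k m : ℕ) (ω : Ω) : ℕ :=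
  ((Finset.Ico 1 k).filter (fun j => X j ω = m)).card

/-- The overflow: the number of balls among `1,…,n` that land in an urn already
containing `r` balls. -/
def overflow {Ω : Type*} (X : ℕ → Ω → ℕ) (r n : ℕ) (ω : Ω) : ℕ :=
  ((Finset.Icc 1 n).filter (fun k => r ≤ urnCount X k (X k ω) ω)).card

set_option linter.unusedSectionVars false
set_option linter.unusedVariables false

section aux
variable {Ω : Type*} [MeasurableSpace Ω] {μ : Measure Ω} [IsProbabilityMeasure μ]
  {Y : ℕ → Ω → ℕ}

lemma ovf_prod (hind : iIndepFun Y μ) (T : Finset ℕ) (A : ℕ → Set ℕ) :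
    μ (⋂ j ∈ T, Y j ⁻¹' A j) = ∏ j ∈ T, μ (Y j ⁻¹' A j) :=
  hind.meas_biInter fun j _ => ⟨A j, .of_discrete, rfl⟩

lemma ovf_cnt_meas (hm : ∀ k, Measurable (Y k)) (k m : ℕ) :
    Measurable (fun ω => urnCount Y k m ω) := by
  unfold urnCount
  simp_rw [Finset.card_filter]
  exact Finset.measurable_sum _ fun j _ =>
    Measurable.ite ((hm j) (MeasurableSet.singleton m)) measurable_const measurable_const
end aux

section aux2
set_option linter.unusedSectionVars false
variable {Ω : Type*} [MeasurableSpace Ω] {μ : Measure Ω} [IsProbabilityMeasure μ]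
  {Y : ℕ → Ω → ℕ} {P : ℕ → ℝ≥0∞}

lemma ovf_event_eq (k m : ℕ) {S : Finset ℕ} (hS : S ⊆ Finset.Ico 1 k) :
    {ω | Y k ω = m ∧ (Finset.Ico 1 k).filter (fun j => Y j ω = m) = S}
      = ⋂ j ∈ insert k (Finset.Ico 1 k),
          Y j ⁻¹' (if j = k ∨ j ∈ S then {m} else {m}ᶜ) := by
  have hk : k ∉ Finset.Ico 1 k := by simp
  ext ω
  simp only [Set.mem_setOf_eq, Set.mem_iInter, Finset.mem_insert, Set.mem_preimage]
  constructor
  · rintro ⟨h1, h2⟩ j hj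
    rcases hj with rfl | hj
    · simp [h1]
    · have hjk : j ≠ k := by
        intro h; exact hk (h ▸ hj)
      by_cases hjS : j ∈ S
      · have := (Finset.mem_filter.mp (h2 ▸ hjS)).2
        simp [hjS, this]
      · simp only [hjk, hjS, or_self, if_false, Set.mem_compl_iff,
          Set.mem_singleton_iff]
        intro h
        exact hjS (h2 ▸ Finset.mem_filter.mpr ⟨hj, h⟩)
  · intro h
    have h1 : Y k ω = m := by
      have := h k (Or.inl rfl); simpa using this
    refine ⟨h1, ?_⟩
    ext j
    simp only [Finset.mem_filter]
    constructor
    · rintro ⟨hj, hYj⟩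
      by_contra hjS
      have hjk : j ≠ k := fun h => hk (h ▸ hj)
      have := h j (Or.inr hj)
      simp [hjk, hjS, hYj] at this
    · intro hjS
      refine ⟨hS hjS, ?_⟩
      have := h j (Or.inr (hS hjS))
      simpa [hjS] using this

lemma ovf_event_meas (hm : ∀ k, Measurable (Y k)) (k m : ℕ) {S : Finset ℕ}
    (hS : S ⊆ Finset.Ico 1 k) :
    MeasurableSet {ω | Y k ω = m ∧ (Finset.Ico 1 k).filter (fun j => Y j ω = m) = S} := by
  rw [ovf_event_eq k m hS]
  exact Finset.measurableSet_biInter _ fun j _ => (hm j) .of_discrete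

lemma ovf_exact (hm : ∀ k, Measurable (Y k))
    (hind : iIndepFun Y μ)
    (hP : ∀ j m, μ (Y j ⁻¹' {m}) = P m)
    (k m : ℕ) {S : Finset ℕ} (hS : S ⊆ Finset.Ico 1 k) :
    μ {ω | Y k ω = m ∧ (Finset.Ico 1 k).filter (fun j => Y j ω = m) = S}
      = P m * (P m ^ S.card * (1 - P m) ^ (k - 1 - S.card)) := by
  have hk : k ∉ Finset.Ico 1 k := by simp
  rw [ovf_event_eq k m hS, ovf_prod hind, Finset.prod_insert hk]
  have hcompl : ∀ j, μ (Y j ⁻¹' {m})ᶜ = 1 - P m := by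
    intro j
    rw [measure_compl ((hm j) (MeasurableSet.singleton m))
      (measure_ne_top μ _), measure_univ, hP]
  have hprod : ∏ j ∈ Finset.Ico 1 k,
        μ (Y j ⁻¹' (if j = k ∨ j ∈ S then {m} else {m}ᶜ))
      = P m ^ S.card * (1 - P m) ^ (k - 1 - S.card) := by
    have heq : ∀ j ∈ Finset.Ico 1 k,
        μ (Y j ⁻¹' (if j = k ∨ j ∈ S then {m} else {m}ᶜ))
        = if j ∈ S then P m else 1 - P m := by
      intro j hj
      have hjk : j ≠ k := fun h => hk (h ▸ hj)
      by_cases hjS : j ∈ S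
      · simp [hjS, hP]
      · simp only [hjk, hjS, or_self, if_false, Set.preimage_compl]
        exact hcompl j
    rw [Finset.prod_congr rfl heq, Finset.prod_ite, Finset.prod_const, Finset.prod_const]
    have h1 : (Finset.Ico 1 k).filter (fun j => j ∈ S) = S := by
      rw [Finset.filter_mem_eq_inter, Finset.inter_eq_right.mpr hS]
    have h2 : ((Finset.Ico 1 k).filter (fun j => ¬ j ∈ S)).card = k - 1 - S.card := by
      have := Finset.card_filter_add_card_filter_not (s := Finset.Ico 1 k)
        (p := fun j => j ∈ S)
      rw [h1, Nat.card_Ico] at this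
      have hc := Finset.card_le_card hS
      rw [Nat.card_Ico] at hc
      omega
    rw [h1, h2]
  rw [hprod]
  congr 1
  simp [hP]

lemma ovf_binom (hm : ∀ k, Measurable (Y k))
    (hind : iIndepFun Y μ)
    (hP : ∀ j m, μ (Y j ⁻¹' {m}) = P m) (k m i : ℕ) :
    μ {ω | Y k ω = m ∧ urnCount Y k m ω = i}
      = ((k - 1).choose i : ℝ≥0∞) * (P m * (P m ^ i * (1 - P m) ^ (k - 1 - i))) := by
  have hE : {ω | Y k ω = m ∧ urnCount Y k m ω = i}
      = ⋃ S ∈ (Finset.Ico 1 k).powersetCard i,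
          {ω | Y k ω = m ∧ (Finset.Ico 1 k).filter (fun j => Y j ω = m) = S} := by
    ext ω
    simp only [Set.mem_setOf_eq, Set.mem_iUnion, Finset.mem_powersetCard, exists_prop,
      urnCount]
    constructor
    · rintro ⟨h1, h2⟩
      exact ⟨_, ⟨Finset.filter_subset _ _, h2⟩, h1, rfl⟩
    · rintro ⟨S, ⟨hS, hcard⟩, h1, h2⟩
      exact ⟨h1, by rw [h2, hcard]⟩
  rw [hE, measure_biUnion_finset]
  · have hconst : ∀ S ∈ (Finset.Ico 1 k).powersetCard i,
        μ {ω | Y k ω = m ∧ (Finset.Ico 1 k).filter (fun j => Y j ω = m) = S}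
          = P m * (P m ^ i * (1 - P m) ^ (k - 1 - i)) := by
      intro S hS
      obtain ⟨hSs, hcard⟩ := Finset.mem_powersetCard.mp hS
      rw [ovf_exact hm hind hP k m hSs, hcard]
    rw [Finset.sum_congr rfl hconst, Finset.sum_const, Finset.card_powersetCard,
      Nat.card_Ico, nsmul_eq_mul]
  · intro S hS S' hS' hne
    simp only [Function.onFun]
    refine Set.disjoint_left.mpr fun ω h1 h2 => hne ?_
    rw [← h1.2, ← h2.2]
  · intro S hS
    exact ovf_event_meas hm k m (Finset.mem_powersetCard.mp hS).1

lemma ovf_tail (hm : ∀ k, Measurable (Y k))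
    (hind : iIndepFun Y μ)
    (hP : ∀ j m, μ (Y j ⁻¹' {m}) = P m) {r : ℕ} (hr : 1 ≤ r) (k m : ℕ) :
    μ {ω | Y k ω = m ∧ r ≤ urnCount Y k m ω}
      = ∑ i ∈ Finset.Icc r (k - 1),
          ((k - 1).choose i : ℝ≥0∞) * (P m * (P m ^ i * (1 - P m) ^ (k - 1 - i))) := by
  have hub : ∀ ω, urnCount Y k m ω ≤ k - 1 := by
    intro ω
    have := Finset.card_filter_le (Finset.Ico 1 k) (fun j => Y j ω = m)
    rwa [Nat.card_Ico] at this
  have hE : {ω | Y k ω = m ∧ r ≤ urnCount Y k m ω}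
      = ⋃ i ∈ Finset.Icc r (k - 1), {ω | Y k ω = m ∧ urnCount Y k m ω = i} := by
    ext ω
    simp only [Set.mem_setOf_eq, Set.mem_iUnion, Finset.mem_Icc, exists_prop]
    constructor
    · rintro ⟨h1, h2⟩
      exact ⟨urnCount Y k m ω, ⟨h2, hub ω⟩, h1, rfl⟩
    · rintro ⟨i, ⟨hi, _⟩, h1, h2⟩
      exact ⟨h1, h2 ▸ hi⟩
  rw [hE, measure_biUnion_finset]
  · exact Finset.sum_congr rfl fun i _ => ovf_binom hm hind hP k m i
  · intro i hi i' hi' hne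
    simp only [Function.onFun]
    refine Set.disjoint_left.mpr fun ω h1 h2 => hne ?_
    rw [← h1.2, ← h2.2]
  · intro i hi
    rw [Set.setOf_and]
    exact ((hm k) (MeasurableSet.singleton m)).inter
      ((ovf_cnt_meas hm k m) (MeasurableSet.singleton i))

lemma ovf_Ek (hm : ∀ k, Measurable (Y k)) (k r : ℕ) :
    μ {ω | r ≤ urnCount Y k (Y k ω) ω}
      = ∑' m, μ {ω | Y k ω = m ∧ r ≤ urnCount Y k m ω} := by
  have hE : {ω | r ≤ urnCount Y k (Y k ω) ω}
      = ⋃ m, {ω | Y k ω = m ∧ r ≤ urnCount Y k m ω} := by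
    ext ω
    simp only [Set.mem_setOf_eq, Set.mem_iUnion]
    constructor
    · intro h
      exact ⟨Y k ω, rfl, h⟩
    · rintro ⟨m, rfl, h⟩
      exact h
  rw [hE, measure_iUnion]
  · intro m m' hne
    simp only [Function.onFun]
    refine Set.disjoint_left.mpr fun ω h1 h2 => hne ?_
    rw [← h1.1, ← h2.1]
  · intro m
    rw [Set.setOf_and]
    exact ((hm k) (MeasurableSet.singleton m)).inter
      ((ovf_cnt_meas hm k m) .of_discrete)

lemma ovf_Ek_meas (hm : ∀ k, Measurable (Y k)) (k r : ℕ) :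
    MeasurableSet {ω | r ≤ urnCount Y k (Y k ω) ω} := by
  have hE : {ω | r ≤ urnCount Y k (Y k ω) ω}
      = ⋃ m, {ω | Y k ω = m ∧ r ≤ urnCount Y k m ω} := by
    ext ω
    simp only [Set.mem_setOf_eq, Set.mem_iUnion]
    exact ⟨fun h => ⟨Y k ω, rfl, h⟩, fun ⟨m, hm', h⟩ => hm' ▸ h⟩
  rw [hE]
  refine MeasurableSet.iUnion fun m => ?_
  rw [Set.setOf_and]
  exact ((hm k) (MeasurableSet.singleton m)).inter
    ((ovf_cnt_meas hm k m) .of_discrete)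

end aux2

lemma ovf_binom_sum_one {q : ℝ} (r N : ℕ) (h : r ≤ N) :
    ∑ i ∈ Finset.Icc r N, (((N - r).choose (i - r) : ℝ)) * (q ^ (i - r) * (1 - q) ^ (N - i))
      = 1 := by
  rw [← Finset.Ico_add_one_right_eq_Icc, Finset.sum_Ico_eq_sum_range,
    show N + 1 - r = (N - r) + 1 by omega]
  calc ∑ j ∈ Finset.range (N - r + 1),
        ((N - r).choose (r + j - r) : ℝ) * (q ^ (r + j - r) * (1 - q) ^ (N - (r + j)))
      = ∑ j ∈ Finset.range (N - r + 1),
          q ^ j * (1 - q) ^ (N - r - j) * ((N - r).choose j : ℝ) := by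
        refine Finset.sum_congr rfl fun j hj => ?_
        rw [show r + j - r = j by omega, show N - (r + j) = N - r - j by omega]
        ring
    _ = (q + (1 - q)) ^ (N - r) := (add_pow q (1 - q) (N - r)).symm
    _ = 1 := by norm_num

lemma ovf_binom_tail_le {q : ℝ} (h0 : 0 ≤ q) (h1 : q ≤ 1) (r N : ℕ) :
    ∑ i ∈ Finset.Icc r N, ((N.choose i : ℝ)) * (q ^ (i + 1) * (1 - q) ^ (N - i))
      ≤ (N.choose r : ℝ) * q ^ (r + 1) := by
  have hq1 : (0:ℝ) ≤ 1 - q := by linarith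
  by_cases hrN : r ≤ N
  · calc ∑ i ∈ Finset.Icc r N, ((N.choose i : ℝ)) * (q ^ (i + 1) * (1 - q) ^ (N - i))
        ≤ ∑ i ∈ Finset.Icc r N, (N.choose r : ℝ) * q ^ (r + 1) *
            (((N - r).choose (i - r) : ℝ) * (q ^ (i - r) * (1 - q) ^ (N - i))) := by
          refine Finset.sum_le_sum fun i hi => ?_
          obtain ⟨hri, hiN⟩ := Finset.mem_Icc.mp hi
          have hchoose : (N.choose i : ℝ) ≤ (N.choose r : ℝ) * ((N - r).choose (i - r) : ℝ) := by
            have h2 : N.choose i ≤ N.choose r * (N - r).choose (i - r) := by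
              calc N.choose i ≤ N.choose i * i.choose r :=
                    Nat.le_mul_of_pos_right _ (Nat.choose_pos hri)
                _ = N.choose r * (N - r).choose (i - r) := Nat.choose_mul hri
            exact_mod_cast h2
          have hpow : q ^ (i + 1) = q ^ (r + 1) * q ^ (i - r) := by
            rw [← pow_add]
            congr 1
            omega
          rw [hpow]
          have hnn : (0:ℝ) ≤ q ^ (r + 1) * q ^ (i - r) * (1 - q) ^ (N - i) := by positivity
          calc (N.choose i : ℝ) * (q ^ (r + 1) * q ^ (i - r) * (1 - q) ^ (N - i))
              ≤ (N.choose r : ℝ) * ((N - r).choose (i - r) : ℝ) *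
                  (q ^ (r + 1) * q ^ (i - r) * (1 - q) ^ (N - i)) :=
                mul_le_mul_of_nonneg_right hchoose hnn
            _ = (N.choose r : ℝ) * q ^ (r + 1) *
                  (((N - r).choose (i - r) : ℝ) * (q ^ (i - r) * (1 - q) ^ (N - i))) := by
                ring
      _ = (N.choose r : ℝ) * q ^ (r + 1) := by
          rw [← Finset.mul_sum, ovf_binom_sum_one r N hrN, mul_one]
  · rw [Finset.Icc_eq_empty (by omega), Finset.sum_empty]
    positivity

lemma ovf_choose_sum (r n : ℕ) :
    ∑ k ∈ Finset.Icc 1 n, ((k - 1).choose r : ℝ)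
      ≤ (n : ℝ) ^ (r + 1) / ((r + 1).factorial : ℝ) := by
  have h1 : ∑ k ∈ Finset.Icc 1 n, (k - 1).choose r = n.choose (r + 1) := by
    rw [← Finset.Ico_add_one_right_eq_Icc, Finset.sum_Ico_eq_sum_range,
      show n + 1 - 1 = n by omega]
    have hterm : ∀ j ∈ Finset.range n, (1 + j - 1).choose r = j.choose r := by
      intro j _
      congr 1
      omega
    rw [Finset.sum_congr rfl hterm]
    rcases Nat.eq_zero_or_pos n with rfl | hn
    · simp
    · have hsub : Finset.Icc r (n - 1) ⊆ Finset.range n := by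
        intro x hx
        simp only [Finset.mem_Icc] at hx
        simp only [Finset.mem_range]
        omega
      rw [← Finset.sum_subset hsub (fun x hx hnx => Nat.choose_eq_zero_of_lt (by
        simp only [Finset.mem_range] at hx
        simp only [Finset.mem_Icc] at hnx
        omega)), Nat.sum_Icc_choose, show n - 1 + 1 = n by omega]
  rw [← Nat.cast_sum, h1]
  rw [le_div_iff₀ (by positivity)]
  have h2 : n.choose (r + 1) * (r + 1).factorial ≤ n ^ (r + 1) := by
    rw [mul_comm, ← Nat.descFactorial_eq_factorial_mul_choose]
    exact Nat.descFactorial_le_pow n (r + 1)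
  exact_mod_cast h2


/-- Expectation of the overflow:
`E[V_{n,r}] = ∑_{k=1}^n ∑_{i=r}^{k-1} C(k-1,i)·E[p_{X_n}^i (1-p_{X_n})^{k-1-i}]`
and `E[V_{n,r}] ≤ n^{r+1}/(r+1)! · E[p_{X_n}^r]`, where
`E[f(p_{X_n})] = ∑_m p_{n,m} f(p_{n,m})`. -/
theorem overflow_expectation
    {Ω : Type*} [MeasurableSpace Ω] (μ : Measure Ω) [IsProbabilityMeasure μ]
    (X : ℕ → ℕ → Ω → ℕ) (hmeas : ∀ n k, Measurable (X n k))
    (hindep : ∀ n, iIndepFun (X n) μ)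
    (p : ℕ → ℕ → ℝ)
    (hlaw : ∀ n k m, (μ {ω | X n k ω = m}).toReal = p n m)
    (r : ℕ) (hr : 1 ≤ r) (n : ℕ) :
    (∫ ω, (overflow (X n) r n ω : ℝ) ∂μ)
      = ∑ k ∈ Finset.Icc 1 n, ∑ i ∈ Finset.Icc r (k - 1),
          ((k - 1).choose i : ℝ) * ∑' m, (p n m) ^ (i + 1) * (1 - p n m) ^ (k - 1 - i)
    ∧ (∫ ω, (overflow (X n) r n ω : ℝ) ∂μ)
      ≤ (n : ℝ) ^ (r + 1) / ((r + 1).factorial : ℝ) * ∑' m, (p n m) ^ (r + 1) := by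
  set Y := X n with hY
  set q : ℕ → ℝ := p n with hqdef
  have hm : ∀ k, Measurable (Y k) := hmeas n
  have hpre : ∀ j m, (Y j ⁻¹' {m}) = {ω | Y j ω = m} := by
    intro j m; ext ω; simp
  have hq0 : ∀ m, 0 ≤ q m := by
    intro m
    rw [hqdef, ← hlaw n 0 m]
    exact ENNReal.toReal_nonneg
  have hq1 : ∀ m, q m ≤ 1 := by
    intro m
    rw [hqdef, ← hlaw n 0 m]
    calc (μ {ω | X n 0 ω = m}).toReal ≤ (1 : ℝ≥0∞).toReal :=
      ENNReal.toReal_mono ENNReal.one_ne_top prob_le_one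
    _ = 1 := ENNReal.toReal_one
  have hq1' : ∀ m, 0 ≤ 1 - q m := fun m => by linarith [hq1 m]
  set P : ℕ → ℝ≥0∞ := fun m => ENNReal.ofReal (q m) with hPdef
  have hP : ∀ j m, μ (Y j ⁻¹' {m}) = P m := by
    intro j m
    rw [hpre, ← ENNReal.ofReal_toReal (measure_ne_top μ {ω | Y j ω = m}), hlaw n j m]
  -- summability of q
  have htsumP : ∑' m, P m = 1 := by
    have hU : ⋃ m, Y 0 ⁻¹' {m} = Set.univ := by
      ext ω; simp
    calc ∑' m, P m = ∑' m, μ (Y 0 ⁻¹' {m}) := tsum_congr fun m => (hP 0 m).symm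
      _ = μ (⋃ m, Y 0 ⁻¹' {m}) := by
          rw [measure_iUnion _ (fun m => (hm 0) (MeasurableSet.singleton m))]
          intro m m' hne
          simp only [Function.onFun]
          refine Set.disjoint_left.mpr fun ω h1 h2 => hne ?_
          simp only [Set.mem_preimage, Set.mem_singleton_iff] at h1 h2
          rw [← h1, ← h2]
      _ = 1 := by rw [hU, measure_univ]
  have hsumq : Summable q := by
    have := ENNReal.summable_toReal (f := P) (by rw [htsumP]; exact ENNReal.one_ne_top)
    refine this.congr fun m => ?_
    simp [hPdef, ENNReal.toReal_ofReal (hq0 m)]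
  have hsummable : ∀ i j : ℕ, Summable (fun m => q m ^ (i + 1) * (1 - q m) ^ j) := by
    intro i j
    refine Summable.of_nonneg_of_le
      (fun m => mul_nonneg (pow_nonneg (hq0 m) _) (pow_nonneg (hq1' m) _))
      (fun m => ?_) hsumq
    calc q m ^ (i + 1) * (1 - q m) ^ j ≤ q m ^ (i + 1) * 1 :=
        mul_le_mul_of_nonneg_left (pow_le_one₀ (hq1' m) (by linarith [hq0 m]))
          (pow_nonneg (hq0 m) _)
      _ = q m ^ (i + 1) := mul_one _
      _ ≤ q m := pow_le_of_le_one (hq0 m) (hq1 m) (Nat.succ_ne_zero i)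
  -- per-k expectation
  have hTk : ∀ k, (μ {ω | r ≤ urnCount Y k (Y k ω) ω}).toReal
      = ∑ i ∈ Finset.Icc r (k - 1),
          ((k - 1).choose i : ℝ) * ∑' m, q m ^ (i + 1) * (1 - q m) ^ (k - 1 - i) := by
    intro k
    have hterm : ∀ i m, ((k - 1).choose i : ℝ≥0∞) * (P m * (P m ^ i * (1 - P m) ^ (k - 1 - i)))
        = ENNReal.ofReal (((k - 1).choose i : ℝ) * (q m ^ (i + 1) * (1 - q m) ^ (k - 1 - i))) := by
      intro i m
      have h1P : 1 - P m = ENNReal.ofReal (1 - q m) := by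
        rw [ENNReal.ofReal_sub 1 (hq0 m), ENNReal.ofReal_one]
      rw [h1P, hPdef]
      rw [← ENNReal.ofReal_pow (hq0 m), ← ENNReal.ofReal_pow (hq1' m),
        ← ENNReal.ofReal_mul (pow_nonneg (hq0 m) _),
        ← ENNReal.ofReal_mul (hq0 m),
        ← ENNReal.ofReal_natCast ((k - 1).choose i),
        ← ENNReal.ofReal_mul (Nat.cast_nonneg _)]
      congr 1
      rw [pow_succ']
      ring
    rw [ovf_Ek hm k r]
    have h2 : ∀ m, μ {ω | Y k ω = m ∧ r ≤ urnCount Y k m ω}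
        = ∑ i ∈ Finset.Icc r (k - 1),
            ENNReal.ofReal (((k - 1).choose i : ℝ) * (q m ^ (i + 1) * (1 - q m) ^ (k - 1 - i))) := by
      intro m
      rw [ovf_tail hm (hindep n) hP hr k m]
      exact Finset.sum_congr rfl fun i _ => hterm i m
    rw [tsum_congr h2, Summable.tsum_finsetSum (fun i _ => ENNReal.summable)]
    have h3 : ∀ i ∈ Finset.Icc r (k - 1),
        ∑' m, ENNReal.ofReal (((k - 1).choose i : ℝ) * (q m ^ (i + 1) * (1 - q m) ^ (k - 1 - i)))
        = ENNReal.ofReal (((k - 1).choose i : ℝ) * ∑' m, q m ^ (i + 1) * (1 - q m) ^ (k - 1 - i)) := by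
      intro i _
      rw [← ENNReal.ofReal_tsum_of_nonneg
        (fun m => mul_nonneg (Nat.cast_nonneg _)
          (mul_nonneg (pow_nonneg (hq0 m) _) (pow_nonneg (hq1' m) _)))
        ((hsummable i (k - 1 - i)).mul_left _)]
      congr 1
      exact tsum_mul_left
    rw [Finset.sum_congr rfl h3,
      ← ENNReal.ofReal_sum_of_nonneg (fun i _ => mul_nonneg (Nat.cast_nonneg _)
        (tsum_nonneg fun m => mul_nonneg (pow_nonneg (hq0 m) _) (pow_nonneg (hq1' m) _))),
      ENNReal.toReal_ofReal]
    exact Finset.sum_nonneg fun i _ => mul_nonneg (Nat.cast_nonneg _)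
      (tsum_nonneg fun m => mul_nonneg (pow_nonneg (hq0 m) _) (pow_nonneg (hq1' m) _))
  -- integral computation
  have hint : (∫ ω, (overflow Y r n ω : ℝ) ∂μ)
      = ∑ k ∈ Finset.Icc 1 n, (μ {ω | r ≤ urnCount Y k (Y k ω) ω}).toReal := by
    have hover : ∀ ω, (overflow Y r n ω : ℝ)
        = ∑ k ∈ Finset.Icc 1 n,
            Set.indicator {ω' | r ≤ urnCount Y k (Y k ω') ω'} (fun _ => (1 : ℝ)) ω := by
      intro ω
      rw [overflow, Finset.card_filter]
      push_cast
      refine Finset.sum_congr rfl fun k _ => ?_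
      rw [Set.indicator_apply]
      by_cases h : r ≤ urnCount Y k (Y k ω) ω
      · simp [h, Set.mem_setOf_eq]
      · simp [h, Set.mem_setOf_eq]
    rw [integral_congr_ae (Filter.Eventually.of_forall hover),
      integral_finset_sum _ (fun k _ =>
        (integrable_const (1 : ℝ)).indicator (ovf_Ek_meas hm k r))]
    refine Finset.sum_congr rfl fun k _ => ?_
    rw [integral_indicator_const (1 : ℝ) (ovf_Ek_meas hm k r), smul_eq_mul, mul_one, Measure.real]
  have heq : (∫ ω, (overflow Y r n ω : ℝ) ∂μ)
      = ∑ k ∈ Finset.Icc 1 n, ∑ i ∈ Finset.Icc r (k - 1),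
          ((k - 1).choose i : ℝ) * ∑' m, q m ^ (i + 1) * (1 - q m) ^ (k - 1 - i) := by
    rw [hint]
    exact Finset.sum_congr rfl fun k _ => hTk k
  constructor
  · exact heq
  · rw [heq]
    have hbound : ∀ k, ∑ i ∈ Finset.Icc r (k - 1),
        ((k - 1).choose i : ℝ) * ∑' m, q m ^ (i + 1) * (1 - q m) ^ (k - 1 - i)
        ≤ ((k - 1).choose r : ℝ) * ∑' m, q m ^ (r + 1) := by
      intro k
      have hswap : ∑ i ∈ Finset.Icc r (k - 1),
          ((k - 1).choose i : ℝ) * ∑' m, q m ^ (i + 1) * (1 - q m) ^ (k - 1 - i)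
          = ∑' m, ∑ i ∈ Finset.Icc r (k - 1),
              ((k - 1).choose i : ℝ) * (q m ^ (i + 1) * (1 - q m) ^ (k - 1 - i)) := by
        rw [Summable.tsum_finsetSum (fun i _ => (hsummable (i) (k - 1 - i)).mul_left _)]
        exact Finset.sum_congr rfl fun i _ => tsum_mul_left.symm
      rw [hswap]
      have hsum_r : Summable (fun m => q m ^ (r + 1)) := by
        refine (hsummable r 0).congr fun m => ?_
        simp
      calc ∑' m, ∑ i ∈ Finset.Icc r (k - 1),
            ((k - 1).choose i : ℝ) * (q m ^ (i + 1) * (1 - q m) ^ (k - 1 - i))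
          ≤ ∑' m, ((k - 1).choose r : ℝ) * q m ^ (r + 1) := by
            refine Summable.tsum_le_tsum (fun m => ovf_binom_tail_le (hq0 m) (hq1 m) r (k - 1))
              (summable_sum (fun i _ => (hsummable i (k - 1 - i)).mul_left _))
              (hsum_r.mul_left _)
        _ = ((k - 1).choose r : ℝ) * ∑' m, q m ^ (r + 1) := tsum_mul_left
    have hT0 : 0 ≤ ∑' m, q m ^ (r + 1) :=
      tsum_nonneg fun m => pow_nonneg (hq0 m) _
    calc ∑ k ∈ Finset.Icc 1 n, ∑ i ∈ Finset.Icc r (k - 1),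
          ((k - 1).choose i : ℝ) * ∑' m, q m ^ (i + 1) * (1 - q m) ^ (k - 1 - i)
        ≤ ∑ k ∈ Finset.Icc 1 n, ((k - 1).choose r : ℝ) * ∑' m, q m ^ (r + 1) :=
          Finset.sum_le_sum fun k _ => hbound k
      _ = (∑ k ∈ Finset.Icc 1 n, ((k - 1).choose r : ℝ)) * ∑' m, q m ^ (r + 1) := by
          rw [Finset.sum_mul]
      _ ≤ (n : ℝ) ^ (r + 1) / ((r + 1).factorial : ℝ) * ∑' m, q m ^ (r + 1) :=
          mul_le_mul_of_nonneg_right (ovf_choose_sum r n) hT0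
end

section
/- Define d_{n,k} = ∑_{j=k}^{n} (E[Y_{n,j} | F_{n,k}] − E[Y_{n,j} | F_{n,k-1}]), where F_{n,k} = σ(X_{n,1},…,X_{n,k}). Then (d_{n,k})_{k=1}^n is a martingale difference sequence with ∑_{k=1}^n d_{n,k} = V_{n,r} − E[V_{n,r}], and |d_{n,k}| ≤ 2 almost surely for every k. -/
/-!
The first two claims hold for any adapted sequence `Y`: `d k` is a sum of differences
`E[Y j | F k] - E[Y j | F (k-1)]`, which have zero `F (k-1)`-conditional expectation by the tower
property, and summing over `k` telescopes to `∑ j, (Y j - E[Y j])`.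

For the bound, the terms with `j < k` vanish, so `d k = E[V | F k] - E[V | F (k-1)]` for the
overflow `V`. Let `W` be the overflow of the balls other than `k`. Since `W` is a function of balls
independent of ball `k`, `E[W | F k] = E[W | F (k-1)]`, hence
`d k = E[V - W | F k] - E[V - W | F (k-1)]`. Removing one ball changes the overflow by at most one
(at most one other ball of its urn loses its overflow), so `|V - W| ≤ 1` and `|d k| ≤ 2`.
-/

open MeasureTheory ProbabilityTheory Filter
open scoped Classical

/-- Indicator that ball `j` lands in an urn already containing `r` balls. -/
def overIndicator {Ω : Type*} (X : ℕ → Ω → ℕ) (r j : ℕ) (ω : Ω) : ℝ :=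
  if r ≤ urnCount X j (X j ω) ω then 1 else 0

/-- The filtration generated by the first `k` balls. -/
def ballFiltration {Ω : Type*} [MeasurableSpace Ω] (X : ℕ → Ω → ℕ) (k : ℕ) :
    MeasurableSpace Ω :=
  ⨆ j ∈ Finset.Icc 1 k, MeasurableSpace.comap (X j) inferInstance

open Finset

section CondExpIndep

variable {Ω : Type*} {m₁ m₂ mT m0 : MeasurableSpace Ω} {μ : Measure Ω}

lemma setIntegral_inter_eq_mul_of_indep (hT : mT ≤ m0) (h₂ : m₂ ≤ m0) {f : Ω → ℝ}
    (hf : StronglyMeasurable[mT] f) (hindep : Indep mT m₂ μ)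
    {A B : Set Ω} (hA : MeasurableSet[mT] A) (hB : MeasurableSet[m₂] B) :
    ∫ x in A ∩ B, f x ∂μ = (∫ x in A, f x ∂μ) * μ.real B := by
  have hAf : Measurable[mT] (A.indicator f) := hf.measurable.indicator hA
  have hB1 : Measurable[m₂] (B.indicator fun _ => (1 : ℝ)) := measurable_const.indicator hB
  have hindepFun : IndepFun (A.indicator f) (B.indicator fun _ => (1 : ℝ)) μ := by
    rw [IndepFun_iff_Indep]
    exact indep_of_indep_of_le_right (indep_of_indep_of_le_left hindep hAf.comap_le)
      hB1.comap_le
  have hprod : (A ∩ B).indicator f = A.indicator f * B.indicator fun _ => (1 : ℝ) := by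
    ext x
    by_cases hxA : x ∈ A <;> by_cases hxB : x ∈ B <;> simp [hxA, hxB]
  rw [← integral_indicator ((hT _ hA).inter (h₂ _ hB)), hprod,
    hindepFun.integral_mul_eq_mul_integral (hAf.mono hT le_rfl).aestronglyMeasurable
      (hB1.mono h₂ le_rfl).aestronglyMeasurable,
    integral_indicator (hT _ hA), integral_indicator (h₂ _ hB)]
  simp [measureReal_def]

lemma generateFrom_inter_eq_sup (m₁ m₂ : MeasurableSpace Ω) :
    MeasurableSpace.generateFrom
      {s | ∃ A, MeasurableSet[m₁] A ∧ ∃ B, MeasurableSet[m₂] B ∧ s = A ∩ B} = m₁ ⊔ m₂ := by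
  refine le_antisymm (MeasurableSpace.generateFrom_le ?_) (sup_le (fun s hs => ?_) fun s hs => ?_)
  · rintro s ⟨A, hA, B, hB, rfl⟩
    exact (le_sup_left (b := m₂) A hA).inter (le_sup_right (a := m₁) B hB)
  · exact MeasurableSpace.measurableSet_generateFrom ⟨s, hs, _, .univ, (Set.inter_univ s).symm⟩
  · exact MeasurableSpace.measurableSet_generateFrom ⟨_, .univ, s, hs, (Set.univ_inter s).symm⟩

lemma isPiSystem_inter (m₁ m₂ : MeasurableSpace Ω) :
    IsPiSystem {s | ∃ A, MeasurableSet[m₁] A ∧ ∃ B, MeasurableSet[m₂] B ∧ s = A ∩ B} := by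
  rintro _ ⟨A, hA, B, hB, rfl⟩ _ ⟨A', hA', B', hB', rfl⟩ -
  exact ⟨A ∩ A', hA.inter hA', B ∩ B', hB.inter hB', Set.inter_inter_inter_comm _ _ _ _⟩

theorem condExp_sup_ae_eq_of_indep [IsFiniteMeasure μ] (h₁ : m₁ ≤ mT) (hT : mT ≤ m0)
    (h₂ : m₂ ≤ m0) {f : Ω → ℝ} (hf : StronglyMeasurable[mT] f) (hfi : Integrable f μ)
    (hindep : Indep mT m₂ μ) :
    μ[f | m₁ ⊔ m₂] =ᵐ[μ] μ[f | m₁] := by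
  have hsup : m₁ ⊔ m₂ ≤ m0 := sup_le (h₁.trans hT) h₂
  have hgm : StronglyMeasurable[m₁] (μ[f | m₁]) := stronglyMeasurable_condExp
  have hgi : Integrable (μ[f | m₁]) μ := integrable_condExp
  suffices ∀ s, MeasurableSet[m₁ ⊔ m₂] s → ∫ x in s, μ[f | m₁] x ∂μ = ∫ x in s, f x ∂μ from
    (ae_eq_condExp_of_forall_setIntegral_eq hsup hfi (fun s _ _ => hgi.integrableOn)
      (fun s hs _ => this s hs) (hgm.mono (le_sup_left : m₁ ≤ m₁ ⊔ m₂)).aestronglyMeasurable).symm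
  intro s hs
  induction s, hs using MeasurableSpace.induction_on_inter
    (generateFrom_inter_eq_sup m₁ m₂).symm (isPiSystem_inter m₁ m₂) with
  | empty => simp
  | basic t ht =>
    obtain ⟨A, hA, B, hB, rfl⟩ := ht
    rw [setIntegral_inter_eq_mul_of_indep hT h₂ (hgm.mono h₁) hindep
        (h₁ _ hA) hB, setIntegral_inter_eq_mul_of_indep hT h₂ hf hindep (h₁ _ hA) hB,
      setIntegral_condExp (h₁.trans hT) hfi hA]
  | compl t ht h =>
    have hfg : ∫ x, μ[f | m₁] x ∂μ = ∫ x, f x ∂μ := integral_condExp (h₁.trans hT)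
    rw [← integral_add_compl (hsup _ ht) hgi, ← integral_add_compl (hsup _ ht) hfi] at hfg
    linarith
  | iUnion u hdisj hu h =>
    rw [integral_iUnion (fun i => hsup _ (hu i)) hdisj hgi.integrableOn,
      integral_iUnion (fun i => hsup _ (hu i)) hdisj hfi.integrableOn]
    exact tsum_congr h

end CondExpIndep

theorem measurable_comp_of_dependsOn {Ω ι α β : Type*} {m : MeasurableSpace Ω}
    [MeasurableSpace α] [Countable α] [MeasurableSingletonClass α] [MeasurableSpace β]
    {F : (ι → α) → β} {s : Finset ι} (hF : DependsOn F s) {X : ι → Ω → α}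
    (hX : ∀ i ∈ s, Measurable (X i)) :
    Measurable fun ω => F fun i => X i ω := by
  cases isEmpty_or_nonempty β
  · exact measurable_of_empty_codomain _
  obtain ⟨G, rfl⟩ := dependsOn_iff_exists_comp.1 hF
  exact (measurable_of_countable G).comp (measurable_pi_lambda _ fun i => hX i i.2)

lemma Finset.sum_Icc_sub_pred {M : Type*} [AddCommGroup M] (g : ℕ → M) (j : ℕ) :
    ∑ k ∈ Icc 1 j, (g k - g (k - 1)) = g j - g 0 := by
  induction j with
  | zero => simp
  | succ j ih =>
    rw [sum_Icc_succ_top (by omega), ih, Nat.add_sub_cancel]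
    abel

lemma Finset.sum_Icc_sum_Icc_sub_pred {M : Type*} [AddCommGroup M] (g : ℕ → ℕ → M) (n : ℕ) :
    ∑ k ∈ Icc 1 n, ∑ j ∈ Icc k n, (g j k - g j (k - 1)) = ∑ j ∈ Icc 1 n, (g j j - g j 0) := by
  rw [sum_comm' (t' := Icc 1 n) (s' := fun j => Icc 1 j)
    (by intro k j; simp only [mem_Icc]; omega)]
  exact sum_congr rfl fun j _ => sum_Icc_sub_pred (g j) j

section DoobIncrement

variable {Ω : Type*} {m0 : MeasurableSpace Ω} {μ : Measure Ω}

/-- `d_{n,k}`: the increment at time `k` of the Doob martingale of `∑_{j ≤ n} Y j`, keeping only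
the terms `j ≥ k` (the others vanish for an adapted `Y`). -/
noncomputable def doobIncrement (μ : Measure Ω) (ℱ : ℕ → MeasurableSpace Ω) (Y : ℕ → Ω → ℝ)
    (n k : ℕ) : Ω → ℝ :=
  ∑ j ∈ Icc k n, (μ[Y j | ℱ k] - μ[Y j | ℱ (k - 1)])

lemma condExp_condExp_sub_condExp_ae_eq_zero [IsFiniteMeasure μ] {m m' : MeasurableSpace Ω}
    (hm : m ≤ m') (hm' : m' ≤ m0) (f : Ω → ℝ) :
    μ[μ[f | m'] - μ[f | m] | m] =ᵐ[μ] 0 := by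
  filter_upwards [condExp_sub (f := μ[f | m']) integrable_condExp integrable_condExp m,
    condExp_condExp_of_le (f := f) hm hm'] with ω hsub htower
  rw [hsub, Pi.sub_apply, htower,
    condExp_of_stronglyMeasurable (hm.trans hm') stronglyMeasurable_condExp integrable_condExp,
    sub_self, Pi.zero_apply]

variable (ℱ : Filtration ℕ m0) (Y : ℕ → Ω → ℝ) (n : ℕ)

lemma condExp_doobIncrement_ae_eq_zero [IsFiniteMeasure μ] (k : ℕ) :
    μ[doobIncrement μ ℱ Y n k | ℱ (k - 1)] =ᵐ[μ] 0 := by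
  have hzero : ∀ᵐ ω ∂μ, ∀ j ∈ Icc k n,
      μ[μ[Y j | ℱ k] - μ[Y j | ℱ (k - 1)] | ℱ (k - 1)] ω = 0 :=
    (eventually_all_finset _).2 fun j _ =>
      condExp_condExp_sub_condExp_ae_eq_zero (ℱ.mono (Nat.sub_le k 1)) (ℱ.le k) (Y j)
  filter_upwards [condExp_finsetSum (s := Icc k n)
    (f := fun j => μ[Y j | ℱ k] - μ[Y j | ℱ (k - 1)])
    (fun j _ => integrable_condExp.sub integrable_condExp) _, hzero] with ω hsum hzero
  rw [doobIncrement, hsum, Finset.sum_apply, Pi.zero_apply]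
  exact sum_eq_zero hzero

variable {ℱ Y}

lemma sum_doobIncrement [IsProbabilityMeasure μ] (hY : Adapted ℱ Y)
    (hYi : ∀ j, Integrable (Y j) μ) (hℱ : ℱ 0 = ⊥) (ω : Ω) :
    ∑ k ∈ Icc 1 n, doobIncrement μ ℱ Y n k ω
      = ∑ j ∈ Icc 1 n, Y j ω - ∫ ω', ∑ j ∈ Icc 1 n, Y j ω' ∂μ := by
  simp only [doobIncrement, Finset.sum_apply, Pi.sub_apply]
  rw [sum_Icc_sum_Icc_sub_pred (fun j k => μ[Y j | ℱ k] ω), integral_finsetSum _ fun j _ => hYi j,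
    ← sum_sub_distrib]
  refine sum_congr rfl fun j _ => ?_
  rw [condExp_of_stronglyMeasurable (ℱ.le j) (hY j).stronglyMeasurable (hYi j), hℱ, condExp_bot]

lemma doobIncrement_ae_eq [IsFiniteMeasure μ] (hY : Adapted ℱ Y)
    (hYi : ∀ j, Integrable (Y j) μ) {k : ℕ} (hk : 1 ≤ k) :
    doobIncrement μ ℱ Y n k =ᵐ[μ]
      μ[∑ j ∈ Icc 1 n, Y j | ℱ k] - μ[∑ j ∈ Icc 1 n, Y j | ℱ (k - 1)] := by
  have hpast : ∀ j ∈ Icc 1 n, j ∉ Icc k n → μ[Y j | ℱ k] - μ[Y j | ℱ (k - 1)] = 0 := by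
    intro j hj hjk
    have hjk : j ≤ k - 1 := by simp only [mem_Icc] at hj hjk; omega
    rw [condExp_of_stronglyMeasurable (ℱ.le k)
        ((hY j).mono (ℱ.mono (by omega)) le_rfl).stronglyMeasurable (hYi j),
      condExp_of_stronglyMeasurable (ℱ.le _)
        ((hY j).mono (ℱ.mono hjk) le_rfl).stronglyMeasurable (hYi j), sub_self]
  have hsum : doobIncrement μ ℱ Y n k = ∑ j ∈ Icc 1 n, (μ[Y j | ℱ k] - μ[Y j | ℱ (k - 1)]) :=
    sum_subset (Icc_subset_Icc_left hk) hpast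
  filter_upwards [condExp_finsetSum (s := Icc 1 n) (fun j _ => hYi j) (ℱ k),
    condExp_finsetSum (s := Icc 1 n) (fun j _ => hYi j) (ℱ (k - 1))] with ω h h'
  rw [hsum, Pi.sub_apply, h, h', Finset.sum_apply, Finset.sum_apply, Finset.sum_apply,
    ← sum_sub_distrib]
  rfl

end DoobIncrement

lemma ae_abs_condExp_sub_condExp_le {Ω : Type*} {m m' m0 : MeasurableSpace Ω} {μ : Measure Ω}
    {V W : Ω → ℝ} {R : ℝ} (hV : Integrable V μ) (hW : Integrable W μ)
    (hVW : ∀ᵐ ω ∂μ, |V ω - W ω| ≤ R) (hWm : μ[W | m] =ᵐ[μ] μ[W | m']) :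
    ∀ᵐ ω ∂μ, |μ[V | m] ω - μ[V | m'] ω| ≤ 2 * R := by
  filter_upwards [condExp_sub hV hW m, condExp_sub hV hW m', hWm,
    ae_bdd_abs_condExp_of_ae_bdd_abs (m := m) (f := V - W) hVW,
    ae_bdd_abs_condExp_of_ae_bdd_abs (m := m') (f := V - W) hVW]
    with ω h h' hW hb hb'
  simp only [Pi.sub_apply] at h h'
  rw [show μ[V | m] ω - μ[V | m'] ω = μ[V - W | m] ω - μ[V - W | m'] ω by
    rw [h, h', hW]; ring]
  linarith [abs_sub (μ[V - W | m] ω) (μ[V - W | m'] ω)]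

section OverflowSet

variable (x : ℕ → ℕ) (r : ℕ) (s : Finset ℕ)

def urnRank (j : ℕ) : ℕ := #{i ∈ s | i < j ∧ x i = x j}

/-- `overflow` for an arbitrary set `s` of thrown balls, so that a ball can be left out. -/
def overflowSet : Finset ℕ := {j ∈ s | r ≤ urnRank x s j}

variable {x r s}

lemma card_overflowSet_le : #(overflowSet x r s) ≤ #s := card_filter_le _ _

lemma urnRank_lt_urnRank {i j : ℕ} (hi : i ∈ s) (hij : i < j) (hx : x i = x j) :
    urnRank x s i < urnRank x s j := by
  refine card_lt_card ⟨fun a ha => ?_, fun hsub => ?_⟩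
  · simp only [mem_filter] at ha ⊢
    exact ⟨ha.1, ha.2.1.trans hij, ha.2.2.trans hx⟩
  · simpa using hsub (mem_filter.2 ⟨hi, hij, hx⟩)

lemma urnRank_erase_le (k j : ℕ) : urnRank x (s.erase k) j ≤ urnRank x s j :=
  card_le_card (filter_subset_filter _ (erase_subset k s))

lemma urnRank_le_urnRank_erase_add_one (k j : ℕ) :
    urnRank x s j ≤ urnRank x (s.erase k) j + 1 := by
  rw [urnRank, urnRank, filter_erase]
  exact Nat.sub_le_iff_le_add.1 pred_card_le_card_erase

lemma urnRank_erase_eq {k j : ℕ} (h : ¬ (k < j ∧ x k = x j)) :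
    urnRank x (s.erase k) j = urnRank x s j := by
  rw [urnRank, urnRank, filter_erase, erase_eq_of_notMem (by simp [h])]

lemma overflowSet_erase_subset (k : ℕ) : overflowSet x r (s.erase k) ⊆ overflowSet x r s :=
  fun j hj => by
    simp only [overflowSet, mem_filter] at hj ⊢
    exact ⟨mem_of_mem_erase hj.1, hj.2.trans (urnRank_erase_le k j)⟩

lemma of_mem_overflowSet_sdiff_erase {k j : ℕ}
    (hj : j ∈ overflowSet x r s \ overflowSet x r (s.erase k)) :
    j ∈ s ∧ r ≤ urnRank x s j ∧ (j = k ∨ k < j ∧ x k = x j ∧ urnRank x s j = r) := by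
  simp only [overflowSet, Finset.mem_sdiff, Finset.mem_filter, Finset.mem_erase, not_and,
    not_le] at hj
  obtain ⟨⟨hjs, hr⟩, hlost⟩ := hj
  refine ⟨hjs, hr, or_iff_not_imp_left.2 fun hjk => ?_⟩
  have hlt := hlost ⟨hjk, hjs⟩
  have hk : k < j ∧ x k = x j := by
    by_contra h
    rw [urnRank_erase_eq h] at hlt
    omega
  exact ⟨hk.1, hk.2, by have := urnRank_le_urnRank_erase_add_one (x := x) (s := s) k j; omega⟩

/-- A ball other than `k` that loses its overflow lies in the urn of `k` and has rank exactly `r`,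
while ranks increase strictly along an urn. -/
lemma card_overflowSet_sdiff_erase_le_one (k : ℕ) :
    #(overflowSet x r s \ overflowSet x r (s.erase k)) ≤ 1 := by
  refine card_le_one.2 fun a ha b hb => ?_
  by_contra hab
  wlog hlt : a < b generalizing a b
  · exact this b hb a ha (Ne.symm hab) (lt_of_le_of_ne (not_lt.1 hlt) (Ne.symm hab))
  obtain ⟨has, har, ha⟩ := of_mem_overflowSet_sdiff_erase ha
  obtain ⟨-, -, hb⟩ := of_mem_overflowSet_sdiff_erase hb
  obtain ⟨hkb, hxb, hrb⟩ : k < b ∧ x k = x b ∧ urnRank x s b = r := by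
    refine hb.resolve_left ?_
    rintro rfl
    rcases ha with rfl | ⟨hka, -⟩ <;> omega
  have hxa : x a = x b := by
    rcases ha with rfl | ⟨-, hxa, -⟩
    exacts [hxb, hxa ▸ hxb]
  have := urnRank_lt_urnRank has hlt hxa
  omega

lemma abs_card_overflowSet_sub_card_overflowSet_erase_le (k : ℕ) :
    |(#(overflowSet x r s) : ℝ) - #(overflowSet x r (s.erase k))| ≤ 1 := by
  have hsub := overflowSet_erase_subset (x := x) (r := r) (s := s) k
  have hcard := card_sdiff_add_card_eq_card hsub
  have hlost := card_overflowSet_sdiff_erase_le_one (x := x) (r := r) (s := s) k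
  have h₁ : (#(overflowSet x r (s.erase k)) : ℝ) ≤ #(overflowSet x r s) := by
    exact_mod_cast card_le_card hsub
  have h₂ : (#(overflowSet x r s) : ℝ) ≤ #(overflowSet x r (s.erase k)) + 1 := by
    exact_mod_cast (by omega : #(overflowSet x r s) ≤ #(overflowSet x r (s.erase k)) + 1)
  rw [abs_le]
  constructor <;> linarith

lemma dependsOn_overflowSet : DependsOn (fun x => overflowSet x r s) s := by
  intro x y h
  refine filter_congr fun j hj => ?_
  rw [urnRank, urnRank, filter_congr fun i hi => by rw [h i hi, h j hj]]

end OverflowSet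

section Balls

variable {Ω : Type*} [m0 : MeasurableSpace Ω] {X : ℕ → Ω → ℕ}

lemma ballFiltration_mono : Monotone (ballFiltration X) := fun _ _ hkl =>
  iSup₂_le fun j hj => le_iSup₂_of_le (f := fun j (_ : j ∈ Icc 1 _) =>
    MeasurableSpace.comap (X j) inferInstance) j (Icc_subset_Icc_right hkl hj) le_rfl

lemma ballFiltration_le (hX : ∀ i, Measurable (X i)) (k : ℕ) : ballFiltration X k ≤ m0 :=
  iSup₂_le fun j _ => (hX j).comap_le

def ballFiltration.toFiltration (hX : ∀ i, Measurable (X i)) : Filtration ℕ m0 :=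
  ⟨ballFiltration X, ballFiltration_mono, ballFiltration_le hX⟩

lemma ballFiltration_zero : ballFiltration X 0 = ⊥ := by
  simp [ballFiltration]

lemma ballFiltration_add_one (k : ℕ) :
    ballFiltration X (k + 1) =
      ballFiltration X k ⊔ MeasurableSpace.comap (X (k + 1)) inferInstance := by
  have hIcc : Icc 1 (k + 1) = insert (k + 1) (Icc 1 k) := by
    ext
    simp only [mem_Icc, mem_insert]
    omega
  rw [ballFiltration, hIcc, Finset.iSup_insert, sup_comm]
  rfl

lemma measurable_of_mem_ballFiltration {j k : ℕ} (hj : j ∈ Icc 1 k) :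
    Measurable[ballFiltration X k] (X j) :=
  measurable_iff_comap_le.2 <| le_iSup₂ (f := fun j (_ : j ∈ Icc 1 k) =>
    MeasurableSpace.comap (X j) inferInstance) j hj

lemma condExp_ballFiltration_ae_eq_of_indep {μ : Measure Ω} [IsFiniteMeasure μ]
    (hX : ∀ i, Measurable (X i)) (hindep : iIndepFun X μ) {k : ℕ} (hk : 1 ≤ k) {f : Ω → ℝ}
    (hf : StronglyMeasurable[⨆ j ∈ ({k}ᶜ : Set ℕ), MeasurableSpace.comap (X j) inferInstance] f)
    (hfi : Integrable f μ) :
    μ[f | ballFiltration X k] =ᵐ[μ] μ[f | ballFiltration X (k - 1)] := by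
  obtain ⟨k, rfl⟩ := Nat.exists_eq_add_of_le' hk
  have hpast : ballFiltration X k ≤
      ⨆ j ∈ ({k + 1}ᶜ : Set ℕ), MeasurableSpace.comap (X j) inferInstance :=
    iSup₂_le fun j hj => le_iSup₂ (f := fun j (_ : j ∈ ({k + 1}ᶜ : Set ℕ)) =>
      MeasurableSpace.comap (X j) inferInstance) j (by
        simp only [mem_Icc] at hj
        simp only [Set.mem_compl_iff, Set.mem_singleton_iff]
        omega)
  have hindepk : Indep (⨆ j ∈ ({k + 1}ᶜ : Set ℕ), MeasurableSpace.comap (X j) inferInstance)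
      (MeasurableSpace.comap (X (k + 1)) inferInstance) μ := by
    simpa using indep_iSup_of_disjoint (fun i => (hX i).comap_le) hindep.iIndep
      (disjoint_compl_left (a := ({k + 1} : Set ℕ)))
  rw [ballFiltration_add_one, Nat.add_sub_cancel]
  exact condExp_sup_ae_eq_of_indep hpast (iSup₂_le fun j _ => (hX j).comap_le)
    (hX _).comap_le hf hfi hindepk

end Balls

section Overflow

variable {Ω : Type*} {X : ℕ → Ω → ℕ} (r : ℕ)

lemma overflow_eq_card_overflowSet (n : ℕ) (ω : Ω) :
    overflow X r n ω = #(overflowSet (X · ω) r (Icc 1 n)) := by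
  refine congrArg card (filter_congr fun j hj => ?_)
  rw [urnCount, urnRank]
  congr! 2
  ext i
  simp only [mem_filter, mem_Ico, mem_Icc] at hj ⊢
  grind

lemma abs_overflow_sub_card_overflowSet_erase_le (n k : ℕ) (ω : Ω) :
    |(overflow X r n ω : ℝ) - #(overflowSet (X · ω) r ((Icc 1 n).erase k))| ≤ 1 := by
  rw [overflow_eq_card_overflowSet]
  exact abs_card_overflowSet_sub_card_overflowSet_erase_le k

lemma overflow_eq_sum_overIndicator (n : ℕ) (ω : Ω) :
    (overflow X r n ω : ℝ) = ∑ j ∈ Icc 1 n, overIndicator X r j ω := by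
  rw [overflow, natCast_card_filter]
  rfl

lemma measurable_card_overflowSet {m : MeasurableSpace Ω} {s : Finset ℕ}
    (hX : ∀ i ∈ s, Measurable (X i)) : Measurable fun ω => (#(overflowSet (X · ω) r s) : ℝ) :=
  measurable_comp_of_dependsOn (F := fun x => (#(overflowSet x r s) : ℝ))
    (fun _ _ h => congrArg (fun t : Finset ℕ => (#t : ℝ)) (dependsOn_overflowSet h)) hX

variable [MeasurableSpace Ω]

lemma measurable_overIndicator (j : ℕ) : Measurable[ballFiltration X j] (overIndicator X r j) := by
  refine measurable_comp_of_dependsOn (s := Icc 1 j)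
    (F := fun x => if r ≤ #{i ∈ Ico 1 j | x i = x j} then (1 : ℝ) else 0) (fun x y h => ?_)
    fun i hi => measurable_of_mem_ballFiltration hi
  rcases Nat.eq_zero_or_pos j with rfl | hj
  · simp
  · simp only [coe_Icc, Set.mem_Icc] at h
    dsimp only
    rw [h j ⟨hj, le_rfl⟩, filter_congr fun i hi => by
      rw [h i (by simp only [mem_Ico] at hi; omega)]]

lemma integrable_overIndicator {μ : Measure Ω} [IsFiniteMeasure μ] (hX : ∀ i, Measurable (X i))
    (j : ℕ) : Integrable (overIndicator X r j) μ :=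
  .of_bound ((measurable_overIndicator r j).mono (ballFiltration_le hX j)
    le_rfl).aestronglyMeasurable 1 (.of_forall fun ω => by unfold overIndicator; split_ifs <;> simp)

lemma integrable_card_overflowSet {μ : Measure Ω} [IsFiniteMeasure μ] {s : Finset ℕ}
    (hX : ∀ i ∈ s, Measurable (X i)) :
    Integrable (fun ω => (#(overflowSet (X · ω) r s) : ℝ)) μ :=
  .of_bound (measurable_card_overflowSet r hX).aestronglyMeasurable #s
    (.of_forall fun ω => by simpa using card_overflowSet_le)

lemma condExp_card_overflowSet_ae_eq_of_notMem {μ : Measure Ω} [IsFiniteMeasure μ]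
    (hX : ∀ i, Measurable (X i)) (hindep : iIndepFun X μ) {k : ℕ} (hk : 1 ≤ k) {s : Finset ℕ}
    (hks : k ∉ s) :
    μ[fun ω => (#(overflowSet (X · ω) r s) : ℝ) | ballFiltration X k] =ᵐ[μ]
      μ[fun ω => (#(overflowSet (X · ω) r s) : ℝ) | ballFiltration X (k - 1)] :=
  condExp_ballFiltration_ae_eq_of_indep hX hindep hk
    (measurable_card_overflowSet r fun i hi => measurable_iff_comap_le.2 <|
      le_iSup₂ (f := fun j (_ : j ∈ ({k}ᶜ : Set ℕ)) => MeasurableSpace.comap (X j) inferInstance)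
        i fun hik => hks (hik ▸ hi)).stronglyMeasurable
    (integrable_card_overflowSet r fun i _ => hX i)

end Overflow

theorem overflow_martingale_decomposition_general
    {Ω : Type*} [MeasurableSpace Ω] (μ : Measure Ω) [IsProbabilityMeasure μ]
    (X : ℕ → ℕ → Ω → ℕ) (hmeas : ∀ n k, Measurable (X n k))
    (hindep : ∀ n, iIndepFun (X n) μ)
    (r : ℕ) (n : ℕ)
    (d : ℕ → Ω → ℝ)
    (hd : ∀ k ω, d k ω = ∑ j ∈ Finset.Icc k n,
      ((μ[overIndicator (X n) r j | ballFiltration (X n) k]) ω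
        - (μ[overIndicator (X n) r j | ballFiltration (X n) (k - 1)]) ω)) :
    (∀ k ∈ Finset.Icc 1 n,
        μ[d k | ballFiltration (X n) (k - 1)] =ᵐ[μ] 0)
    ∧ (∀ᵐ ω ∂μ, ∑ k ∈ Finset.Icc 1 n, d k ω
        = (overflow (X n) r n ω : ℝ) - ∫ ω', (overflow (X n) r n ω' : ℝ) ∂μ)
    ∧ (∀ k ∈ Finset.Icc 1 n, ∀ᵐ ω ∂μ, |d k ω| ≤ 2) := by
  let ℱ := ballFiltration.toFiltration (hmeas n)
  let Y : ℕ → Ω → ℝ := fun j => overIndicator (X n) r j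
  have hY : Adapted ℱ Y := measurable_overIndicator r
  have hYi : ∀ j, Integrable (Y j) μ := integrable_overIndicator r (hmeas n)
  obtain rfl : d = doobIncrement μ ℱ Y n := by
    ext k ω
    rw [hd, doobIncrement, Finset.sum_apply]
    rfl
  refine ⟨fun k _ => condExp_doobIncrement_ae_eq_zero ℱ Y n k, .of_forall fun ω => ?_,
    fun k hk => ?_⟩
  · simp only [sum_doobIncrement n hY hYi ballFiltration_zero, Y,
      ← overflow_eq_sum_overIndicator]
  have hk1 : 1 ≤ k := (mem_Icc.1 hk).1
  have hVW : ∀ᵐ ω ∂μ,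
      |(∑ j ∈ Icc 1 n, Y j) ω - #(overflowSet (X n · ω) r ((Icc 1 n).erase k))| ≤ 1 :=
    .of_forall fun ω => by
      simpa only [Finset.sum_apply, Y, ← overflow_eq_sum_overIndicator]
        using abs_overflow_sub_card_overflowSet_erase_le r n k ω
  filter_upwards [doobIncrement_ae_eq n hY hYi hk1,
    ae_abs_condExp_sub_condExp_le (m := ℱ k) (m' := ℱ (k - 1))
      (integrable_finsetSum' _ fun j _ => hYi j)
      (integrable_card_overflowSet r fun i _ => hmeas n i) hVW
      (condExp_card_overflowSet_ae_eq_of_notMem r (hmeas n) (hindep n) hk1 (notMem_erase k _))]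
    with ω hdk hbound
  rw [hdk, Pi.sub_apply]
  linarith

/-- The martingale-difference decomposition of the centered overflow:
`d_{n,k} = ∑_{j=k}^n (E[Y_{n,j}|F_{n,k}] − E[Y_{n,j}|F_{n,k-1}])` satisfies
`E[d_{n,k}|F_{n,k-1}] = 0`, `∑_{k=1}^n d_{n,k} = V_{n,r} − E[V_{n,r}]` a.s., and
`|d_{n,k}| ≤ 2` a.s. -/
theorem overflow_martingale_decomposition
    {Ω : Type*} [MeasurableSpace Ω] (μ : Measure Ω) [IsProbabilityMeasure μ]
    (X : ℕ → ℕ → Ω → ℕ) (hmeas : ∀ n k, Measurable (X n k))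
    (hindep : ∀ n, iIndepFun (X n) μ)
    (hident : ∀ n k l, IdentDistrib (X n k) (X n l) μ μ)
    (r : ℕ) (hr : 1 ≤ r) (n : ℕ)
    (d : ℕ → Ω → ℝ)
    (hd : ∀ k ω, d k ω = ∑ j ∈ Finset.Icc k n,
      ((μ[overIndicator (X n) r j | ballFiltration (X n) k]) ω
        - (μ[overIndicator (X n) r j | ballFiltration (X n) (k - 1)]) ω)) :
    (∀ k ∈ Finset.Icc 1 n,
        μ[d k | ballFiltration (X n) (k - 1)] =ᵐ[μ] 0)
    ∧ (∀ᵐ ω ∂μ, ∑ k ∈ Finset.Icc 1 n, d k ω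
        = (overflow (X n) r n ω : ℝ) - ∫ ω', (overflow (X n) r n ω' : ℝ) ∂μ)
    ∧ (∀ k ∈ Finset.Icc 1 n, ∀ᵐ ω ∂μ, |d k ω| ≤ 2) :=
  overflow_martingale_decomposition_general μ X hmeas hindep r n d hd
end
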